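/- arXiv:1710.07870 — 3 statements merged into one kernel-verified Lean document; each statement's English description precedes it below -/
import Mathlib

section
/- Let V ⊆ P^m be an irreducible projective variety of dimension n over an algebraically closed field, and let Q_1, ..., Q_{n+1} be homogeneous polynomials of common degree d with V ∩ {Q_1 = 0} ∩ ... ∩ {Q_{n+1} = 0} = ∅. Then the morphism Φ: V → P^n given by Φ(x) = (Q_1(x) : ... : Q_{n+1}(x)) is a well-defined finite morphism; in particular Φ(V) has dimension n. -/
/-!
By the Nullstellensatz, the hypothesis says that `I + (Q_0, …, Q_n)` contains a power `𝔪 ^ N` of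
the irrelevant ideal. As `I` and the `Q_j` are homogeneous, a form of degree `e ≥ N` is then,
modulo `I`, a combination of the `Q_j` with coefficients that are forms of degree `e - d < e`;
by induction on the degree, `K[x] ⧸ I` is spanned over `K[y]` (acting through `y_j ↦ Q_j`) by
the finitely many monomials of degree `< N`. The resulting finite, hence integral, injection
`K[y] ⧸ ker φ ↪ K[x] ⧸ I` preserves Krull dimension by going up and incomparability.
-/

namespace MvPolynomial

attribute [local instance] MvPolynomial.gradedAlgebra

theorem homogeneousComponent_add_mul_of_isHomogeneous {σ R : Type*} [CommSemiring R]
    {Q : MvPolynomial σ R} {d : ℕ} (hQ : Q.IsHomogeneous d) (c : MvPolynomial σ R) (e : ℕ) :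
    homogeneousComponent (e + d) (c * Q) = homogeneousComponent e c * Q := by
  rw [← decomposition.decompose'_apply, ← decomposition.decompose'_apply]
  exact DirectSum.coe_decompose_mul_add_of_right_mem (homogeneousSubmodule σ R) (a := c) (i := e)
    ((mem_homogeneousSubmodule d Q).2 hQ)

theorem idealOfVars_le_radical_of_zeroLocus_subset {σ K : Type*} [Field K] [IsAlgClosed K]
    [Finite σ] {J : Ideal (MvPolynomial σ K)} (hJ : zeroLocus K J ⊆ {0}) :
    idealOfVars σ K ≤ J.radical := by
  rw [← vanishingIdeal_zeroLocus_eq_radical (K := K), Ideal.span_le]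
  rintro _ ⟨i, rfl⟩ x hx
  have hx0 : x = 0 := hJ hx
  simp [hx0]

section GradedFiniteness

variable {σ ι R : Type*} [CommRing R] [Fintype ι] {I : Ideal (MvPolynomial σ R)}
  {Q : ι → MvPolynomial σ R} {d : ℕ}

theorem exists_isHomogeneous_sub_sum_mul_mem
    (hI : ∀ f ∈ I, ∀ e : ℕ, homogeneousComponent e f ∈ I) (hQ : ∀ j, (Q j).IsHomogeneous d)
    {e : ℕ} (hde : d ≤ e) {f : MvPolynomial σ R} (hf : f.IsHomogeneous e)
    (hfJ : f ∈ I ⊔ Ideal.span (Set.range Q)) :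
    ∃ c : ι → MvPolynomial σ R, (∀ j, (c j).IsHomogeneous (e - d)) ∧ f - ∑ j, c j * Q j ∈ I := by
  obtain ⟨g, hg, t, ht, rfl⟩ := Submodule.mem_sup.mp hfJ
  obtain ⟨c, rfl⟩ := Ideal.mem_span_range_iff_exists_fun.mp ht
  refine ⟨fun j => homogeneousComponent (e - d) (c j),
    fun j => homogeneousComponent_isHomogeneous _ _, ?_⟩
  obtain ⟨k, rfl⟩ : ∃ k, e = k + d := ⟨e - d, by omega⟩
  rw [← homogeneousComponent_eq_self hf, map_add, map_sum, Nat.add_sub_cancel]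
  simp only [homogeneousComponent_add_mul_of_isHomogeneous (hQ _), add_sub_cancel_right]
  exact hI g hg _

variable {A : Type*} [CommRing A] [Algebra R A] [Algebra A (MvPolynomial σ R ⧸ I)]
  [IsScalarTower R A (MvPolynomial σ R ⧸ I)] {N : ℕ}

theorem mk_mem_span_monomial_of_degree_lt {f : MvPolynomial σ R}
    (hf : ∀ s ∈ f.support, s.degree < N) :
    Ideal.Quotient.mk I f ∈ Submodule.span A
      ((fun s => Ideal.Quotient.mk I (monomial s 1)) '' {s | s.degree < N}) := by
  rw [f.as_sum, map_sum]
  refine Submodule.sum_mem _ fun s hs => ?_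
  rw [← mul_one (coeff s f), ← C_mul_monomial, map_mul, ← algebraMap_eq,
    Ideal.Quotient.mk_algebraMap, ← Algebra.smul_def]
  exact Submodule.smul_of_tower_mem _ _ (Submodule.subset_span ⟨s, hf s hs, rfl⟩)

theorem mk_mem_span_monomial_of_isHomogeneous
    (hI : ∀ f ∈ I, ∀ e : ℕ, homogeneousComponent e f ∈ I) (hQ : ∀ j, (Q j).IsHomogeneous d)
    (hd : 0 < d) (hQA : ∀ j, Ideal.Quotient.mk I (Q j) ∈ Set.range (algebraMap A _))
    (hN : idealOfVars σ R ^ N ≤ I ⊔ Ideal.span (Set.range Q)) (hdN : d ≤ N)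
    (e : ℕ) {f : MvPolynomial σ R} (hf : f.IsHomogeneous e) :
    Ideal.Quotient.mk I f ∈ Submodule.span A
      ((fun s => Ideal.Quotient.mk I (monomial s 1)) '' {s | s.degree < N}) := by
  induction e using Nat.strong_induction_on generalizing f with
  | _ e ih =>
  have hdeg : ∀ s ∈ f.support, s.degree = e := fun s hs =>
    of_not_not fun h => mem_support_iff.mp hs (hf.coeff_eq_zero h)
  rcases lt_or_ge e N with he | he
  · exact mk_mem_span_monomial_of_degree_lt fun s hs => hdeg s hs ▸ he
  have hfJ : f ∈ I ⊔ Ideal.span (Set.range Q) :=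
    hN ((mem_pow_idealOfVars_iff _ _).2 fun s hs => hdeg s hs ▸ he)
  obtain ⟨c, hc, hfc⟩ := exists_isHomogeneous_sub_sum_mul_mem hI hQ (by omega) hf hfJ
  rw [← Ideal.Quotient.eq] at hfc
  rw [hfc, map_sum]
  refine Submodule.sum_mem _ fun j _ => ?_
  obtain ⟨a, ha⟩ := hQA j
  rw [map_mul, ← ha, mul_comm, ← Algebra.smul_def]
  exact Submodule.smul_mem _ a (ih (e - d) (by omega) (hc j))

theorem module_finite_of_pow_idealOfVars_le [Finite σ]
    (hI : ∀ f ∈ I, ∀ e : ℕ, homogeneousComponent e f ∈ I) (hQ : ∀ j, (Q j).IsHomogeneous d)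
    (hd : 0 < d) (hQA : ∀ j, Ideal.Quotient.mk I (Q j) ∈ Set.range (algebraMap A _))
    (hN : idealOfVars σ R ^ N ≤ I ⊔ Ideal.span (Set.range Q)) :
    Module.Finite A (MvPolynomial σ R ⧸ I) := by
  rw [Module.finite_def, Submodule.fg_def]
  refine ⟨_, (Finsupp.finite_of_degree_lt (max N d)).image
    fun s => Ideal.Quotient.mk I (monomial s (1 : R)),
    eq_top_iff.2 fun x _ => ?_⟩
  obtain ⟨f, rfl⟩ := Ideal.Quotient.mk_surjective x
  rw [← sum_homogeneousComponent f, map_sum]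
  exact Submodule.sum_mem _ fun e _ => mk_mem_span_monomial_of_isHomogeneous hI hQ hd hQA
    ((Ideal.pow_le_pow_right (le_max_left N d)).trans hN) (le_max_right N d) e
    (homogeneousComponent_isHomogeneous e f)

end GradedFiniteness

end MvPolynomial

section KrullDim

variable {B A : Type*} [CommRing B] [CommRing A] [Algebra B A] [Algebra.IsIntegral B A]

theorem ringKrullDim_le_of_isIntegral : ringKrullDim A ≤ ringKrullDim B :=
  Order.krullDim_le_of_strictMono (PrimeSpectrum.comap (algebraMap B A)) fun p q hpq => by
    rw [← PrimeSpectrum.asIdeal_lt_asIdeal] at hpq ⊢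
    exact Ideal.IsIntegral.comap_lt_comap hpq

theorem exists_ltSeries_comap_last_eq_of_isIntegral [FaithfulSMul B A]
    (p : LTSeries (PrimeSpectrum B)) :
    ∃ q : LTSeries (PrimeSpectrum A),
      q.length = p.length ∧ q.last.comap (algebraMap B A) = p.last := by
  induction p using RelSeries.inductionOn' with
  | singleton P =>
    obtain ⟨Q, -, hQ, hQP⟩ := Ideal.exists_ideal_over_prime_of_isIntegral P.asIdeal (⊥ : Ideal A)
      (by simp [← RingHom.ker_eq_comap_bot])
    exact ⟨RelSeries.singleton _ ⟨Q, hQ⟩, rfl, PrimeSpectrum.ext hQP⟩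
  | snoc p P hpP ih =>
    replace hpP : p.last < P := hpP
    obtain ⟨q, hlen, hlast⟩ := ih
    obtain ⟨Q, hqQ, hQ, hQP⟩ := Ideal.exists_ideal_over_prime_of_isIntegral P.asIdeal
      q.last.asIdeal (by rw [← PrimeSpectrum.comap_asIdeal, hlast]; exact hpP.le)
    have hlt : q.last < ⟨Q, hQ⟩ := lt_of_le_of_ne hqQ fun h => hpP.ne <| by
      rw [← hlast]; exact PrimeSpectrum.ext (by rw [PrimeSpectrum.comap_asIdeal, h, hQP])
    exact ⟨q.snoc _ hlt, by simp [hlen], PrimeSpectrum.ext (by simpa using hQP)⟩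

theorem ringKrullDim_le_of_isIntegral_of_faithfulSMul [FaithfulSMul B A] :
    ringKrullDim B ≤ ringKrullDim A :=
  iSup_le fun p => by
    obtain ⟨q, hlen, -⟩ := exists_ltSeries_comap_last_eq_of_isIntegral (A := A) p
    exact hlen ▸ Order.LTSeries.length_le_krullDim q

theorem ringKrullDim_eq_of_isIntegral [FaithfulSMul B A] : ringKrullDim B = ringKrullDim A :=
  ringKrullDim_le_of_isIntegral_of_faithfulSMul.antisymm ringKrullDim_le_of_isIntegral

end KrullDim

theorem RingHom.Finite.ringKrullDim_quotient_ker {B A : Type*} [CommRing B] [CommRing A]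
    {φ : B →+* A} (hφ : φ.Finite) : ringKrullDim (B ⧸ RingHom.ker φ) = ringKrullDim A := by
  let _ := φ.kerLift.toAlgebra
  have : Module.Finite (B ⧸ RingHom.ker φ) A :=
    RingHom.Finite.of_comp_finite (f := Ideal.Quotient.mk _) (by convert hφ; ext; simp)
  have : FaithfulSMul (B ⧸ RingHom.ker φ) A :=
    (faithfulSMul_iff_algebraMap_injective _ _).2 φ.kerLift_injective
  exact ringKrullDim_eq_of_isIntegral

open MvPolynomial

theorem finite_morphism_from_no_common_zero_general
    {K : Type*} [Field K] [IsAlgClosed K] (m n d : ℕ) (hd : 1 ≤ d)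
    (I : Ideal (MvPolynomial (Fin (m + 1)) K))
    (hhomI : ∀ f ∈ I, ∀ e : ℕ, MvPolynomial.homogeneousComponent e f ∈ I)
    (hdim : ringKrullDim (MvPolynomial (Fin (m + 1)) K ⧸ I) = (n + 1 : ℕ))
    (Q : Fin (n + 1) → MvPolynomial (Fin (m + 1)) K)
    (hQhom : ∀ j, (Q j).IsHomogeneous d)
    (hempty : ∀ x : Fin (m + 1) → K, x ≠ 0 → (∀ f ∈ I, MvPolynomial.eval x f = 0) →
      ∃ j, MvPolynomial.eval x (Q j) ≠ 0) :
    (MvPolynomial.eval₂Hom ((Ideal.Quotient.mk I).comp MvPolynomial.C)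
        fun j => Ideal.Quotient.mk I (Q j)).Finite ∧
      ringKrullDim (MvPolynomial (Fin (n + 1)) K ⧸
        RingHom.ker (MvPolynomial.eval₂Hom ((Ideal.Quotient.mk I).comp MvPolynomial.C)
          fun j => Ideal.Quotient.mk I (Q j))) = (n + 1 : ℕ) := by
  set φ := eval₂Hom ((Ideal.Quotient.mk I).comp C) fun j => Ideal.Quotient.mk I (Q j)
  have hcone : zeroLocus K (I ⊔ Ideal.span (Set.range Q)) ⊆ {0} := fun x hx => by
    by_contra hx0
    obtain ⟨j, hj⟩ := hempty x hx0 fun f hf => hx f (Ideal.mem_sup_left hf)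
    exact hj (hx _ (Ideal.mem_sup_right (Ideal.subset_span ⟨j, rfl⟩)))
  obtain ⟨N, hN⟩ := Ideal.exists_pow_le_of_le_radical_of_fg
    (idealOfVars_le_radical_of_zeroLocus_subset hcone) (idealOfVars_fg _ _)
  let _ := φ.toAlgebra
  have : IsScalarTower K (MvPolynomial (Fin (n + 1)) K) (MvPolynomial (Fin (m + 1)) K ⧸ I) :=
    .of_algebraMap_eq fun _ => by
      simp [RingHom.algebraMap_toAlgebra, φ, ← Ideal.Quotient.mk_algebraMap]
  have hfin : φ.Finite := module_finite_of_pow_idealOfVars_le hhomI hQhom hd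
    (fun j => ⟨X j, eval₂Hom_X' _ _ j⟩) hN
  exact ⟨hfin, hfin.ringKrullDim_quotient_ker.trans hdim⟩

/-- Let `V ⊆ ℙ^m` be an irreducible projective variety of
dimension `n` over an algebraically closed field `K` (given by a homogeneous
prime ideal `I` whose affine cone has Krull dimension `n+1`), and let
`Q_0, …, Q_n` be homogeneous polynomials of common degree `d` with no common
zero on `V`. Then the morphism `Φ : V → ℙ^n`, `Φ(x) = (Q_0(x) : ⋯ : Q_n(x))`,
corresponding to the ring homomorphism `φ : K[y_0,…,y_n] → K[x]/I`,
`y_j ↦ Q_j mod I`, is a finite morphism; in particular the image `Φ(V)`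
(with homogeneous ideal `ker φ`) has dimension `n`. -/
theorem finite_morphism_from_no_common_zero
    {K : Type*} [Field K] [IsAlgClosed K] (m n d : ℕ) (hd : 1 ≤ d)
    (I : Ideal (MvPolynomial (Fin (m + 1)) K)) (hprime : I.IsPrime)
    (hhomI : ∀ f ∈ I, ∀ e : ℕ, MvPolynomial.homogeneousComponent e f ∈ I)
    (hdim : ringKrullDim (MvPolynomial (Fin (m + 1)) K ⧸ I) = (n + 1 : ℕ))
    (Q : Fin (n + 1) → MvPolynomial (Fin (m + 1)) K)
    (hQhom : ∀ j, (Q j).IsHomogeneous d)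
    (hempty : ∀ x : Fin (m + 1) → K, x ≠ 0 → (∀ f ∈ I, MvPolynomial.eval x f = 0) →
      ∃ j, MvPolynomial.eval x (Q j) ≠ 0) :
    (MvPolynomial.eval₂Hom ((Ideal.Quotient.mk I).comp MvPolynomial.C)
        fun j => Ideal.Quotient.mk I (Q j)).Finite ∧
      ringKrullDim (MvPolynomial (Fin (n + 1)) K ⧸
        RingHom.ker (MvPolynomial.eval₂Hom ((Ideal.Quotient.mk I).comp MvPolynomial.C)
          fun j => Ideal.Quotient.mk I (Q j))) = (n + 1 : ℕ) :=
  finite_morphism_from_no_common_zero_general m n d hd I hhomI hdim Q hQhom hempty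
end

section
/- Let Y be a projective subvariety of P^{q-1} of dimension n and degree Δ over an algebraically closed field, and let c = (c_1, ..., c_q) be a tuple of positive real numbers. Suppose {i_0, ..., i_n} ⊆ {1, ..., q} is a subset such that Y ∩ {y_{i_0} = ... = y_{i_n} = 0} = ∅. Then the Chow weight satisfies e_Y(c) ≥ (c_{i_0} + ... + c_{i_n}) · Δ. -/
/-- Evertse–Ferretti, Lemma 5.1: Let `Y ⊆ ℙ^{q-1}` be a
projective variety of dimension `n` and degree `Δ` over an algebraically closed
field `K`, given by a homogeneous prime ideal `J` whose affine cone has Krull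
dimension `n+1`, with Chow form `F` (a nonzero polynomial in `n+1` blocks of
`q` variables, multihomogeneous of degree `Δ` in each block, vanishing at
`(u_0, …, u_n)` iff the hyperplanes `H_{u_0}, …, H_{u_n}` meet on `Y`). Let
`c = (c_1, …, c_q)` be positive reals and `i_0, …, i_n` distinct indices with
`Y ∩ {y_{i_0} = ⋯ = y_{i_n} = 0} = ∅`. Then the Chow weight
`e_Y(c) = max over monomials of F of Σ_{i,j} a_{ij} c_j` satisfies
`e_Y(c) ≥ (c_{i_0} + ⋯ + c_{i_n}) Δ`. -/
theorem chow_weight_lower_bound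
    {K : Type*} [Field K] [IsAlgClosed K] (q n Δ : ℕ) (hq : 1 ≤ q)
    (J : Ideal (MvPolynomial (Fin q) K)) (hprime : J.IsPrime)
    (hhomJ : ∀ f ∈ J, ∀ e : ℕ, MvPolynomial.homogeneousComponent e f ∈ J)
    (hdim : ringKrullDim (MvPolynomial (Fin q) K ⧸ J) = (n + 1 : ℕ))
    (F : MvPolynomial (Fin (n + 1) × Fin q) K) (hF : F ≠ 0)
    (hmultihom : ∀ a ∈ F.support, ∀ i : Fin (n + 1), (∑ j, a (i, j)) = Δ)
    (hchow : ∀ u : Fin (n + 1) × Fin q → K,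
      MvPolynomial.eval u F = 0 ↔
        ∃ y : Fin q → K, y ≠ 0 ∧ (∀ f ∈ J, MvPolynomial.eval y f = 0) ∧
          ∀ i : Fin (n + 1), (∑ j, u (i, j) * y j) = 0)
    (c : Fin q → ℝ) (hc : ∀ j, 0 < c j)
    (ii : Fin (n + 1) → Fin q) (hinj : Function.Injective ii)
    (hempty : ∀ y : Fin q → K, y ≠ 0 → (∀ f ∈ J, MvPolynomial.eval y f = 0) →
      ∃ t, y (ii t) ≠ 0) :
    (∑ t, c (ii t)) * Δ ≤
      F.support.sup' (MvPolynomial.support_nonempty.mpr hF)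
        fun a => ∑ p : Fin (n + 1) × Fin q, (a p : ℝ) * c p.2 := by

  classical
  set u : Fin (n + 1) × Fin q → K := fun p => if p.2 = ii p.1 then 1 else 0 with hu
  -- F does not vanish at u
  have hne : MvPolynomial.eval u F ≠ 0 := by
    intro h
    obtain ⟨y, hy0, hyJ, hlin⟩ := (hchow u).mp h
    obtain ⟨t, ht⟩ := hempty y hy0 hyJ
    apply ht
    have h1 := hlin t
    have h2 : (∑ j, u (t, j) * y j) = y (ii t) := by
      simp [hu, ite_mul, one_mul, zero_mul]
    rw [h2] at h1
    exact h1
  -- find a monomial supported on the "diagonal"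
  rw [MvPolynomial.eval_eq] at hne
  obtain ⟨a, haF, ha⟩ := Finset.exists_ne_zero_of_sum_ne_zero hne
  have hprod : ∀ p : Fin (n + 1) × Fin q, u p ^ a p ≠ 0 := by
    intro p
    intro h0
    apply ha
    have hp : p ∈ a.support := by
      rw [Finsupp.mem_support_iff]
      intro h
      rw [h, pow_zero] at h0
      exact one_ne_zero h0
    rw [Finset.prod_eq_zero hp h0, mul_zero]
  have hdiag : ∀ i : Fin (n + 1), ∀ j : Fin q, j ≠ ii i → a (i, j) = 0 := by
    intro i j hj
    by_contra hne0
    apply hprod (i, j)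
    have : u (i, j) = 0 := by simp [hu, hj]
    rw [this, zero_pow hne0]
  have hval : ∀ i : Fin (n + 1), a (i, ii i) = Δ := by
    intro i
    have := hmultihom a haF i
    rwa [Finset.sum_eq_single (ii i) (fun j _ hj => hdiag i j hj)
      (fun h => absurd (Finset.mem_univ _) h)] at this
  have hsum : (∑ p : Fin (n + 1) × Fin q, (a p : ℝ) * c p.2)
      = (∑ t, c (ii t)) * Δ := by
    rw [← Finset.univ_product_univ, Finset.sum_product, Finset.sum_mul]
    refine Finset.sum_congr rfl fun i _ => ?_
    rw [Finset.sum_eq_single (ii i) (fun j _ hj => by rw [hdiag i j hj]; simp)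
      (fun h => absurd (Finset.mem_univ _) h), hval i]
    ring
  calc (∑ t, c (ii t)) * Δ = ∑ p : Fin (n + 1) × Fin q, (a p : ℝ) * c p.2 := hsum.symm
    _ ≤ _ := Finset.le_sup' (fun a => ∑ p : Fin (n + 1) × Fin q, (a p : ℝ) * c p.2) haF
end

section
/- Let V ⊆ P^m be an irreducible projective variety of dimension n and degree δ over an algebraically closed field, and let Φ: V → P^{l-1} be a finite morphism given by homogeneous polynomials of common degree d with no common zero on V. Then Y := Φ(V) is an irreducible projective variety of dimension n and degree deg Y ≤ d^n · δ. -/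
set_option maxHeartbeats 1000000



/-- The Hilbert function of the projective variety defined by a homogeneous
ideal `I ⊆ K[x_0,…,x_{M-1}]`: the dimension of the degree-`u` graded piece of
the homogeneous coordinate ring `K[x]/I`. -/
noncomputable def hilbertFn (K : Type*) [Field K] (M : ℕ)
    (I : Ideal (MvPolynomial (Fin M) K)) (u : ℕ) : ℕ :=
  Module.finrank K ((MvPolynomial.homogeneousSubmodule (Fin M) K u).map
    (Ideal.Quotient.mkₐ K I).toLinearMap)

/-- Krull dimension is preserved by injective integral ring maps. -/
lemma ringKrullDim_eq_of_injective_isIntegral {R S : Type*} [CommRing R] [CommRing S]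
    (f : R →+* S) (hinj : Function.Injective f) (hint : f.IsIntegral) :
    ringKrullDim R = ringKrullDim S := by
  letI := f.toAlgebra
  haveI : Algebra.IsIntegral R S := ⟨hint⟩
  have halg : algebraMap R S = f := rfl
  refine le_antisymm ?_ ?_
  · -- lift chains from R to S
    have key : ∀ N (p : LTSeries (PrimeSpectrum R)), p.length = N →
        ∃ q : LTSeries (PrimeSpectrum S), q.length = N ∧
          q.last.asIdeal.comap f = p.last.asIdeal := by
      intro N
      induction N with
      | zero =>
        intro p _
        haveI := p.last.isPrime
        obtain ⟨Q, _, hQp, hQ⟩ := Ideal.exists_ideal_over_prime_of_isIntegral (S := S)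
          p.last.asIdeal ⊥ (by
            rw [← RingHom.ker_eq_comap_bot, halg,
              (RingHom.injective_iff_ker_eq_bot f).mp hinj]
            exact bot_le)
        exact ⟨RelSeries.singleton _ ⟨Q, hQp⟩, rfl, by rwa [halg] at hQ⟩
      | succ N ih =>
        intro p hp
        obtain ⟨q, hqlen, hqlast⟩ := ih p.eraseLast (by simp [RelSeries.eraseLast_length, hp])
        haveI := p.last.isPrime
        haveI := q.last.isPrime
        have hlt : p.eraseLast.last < p.last :=
          p.eraseLast_last_rel_last (by omega)
        obtain ⟨Q, hge, hQp, hQ⟩ := Ideal.exists_ideal_over_prime_of_isIntegral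
          p.last.asIdeal q.last.asIdeal (by
            rw [halg, hqlast]
            exact le_of_lt hlt)
        rw [halg] at hQ
        have hlt2 : q.last < (⟨Q, hQp⟩ : PrimeSpectrum S) := by
          rw [← PrimeSpectrum.asIdeal_lt_asIdeal]
          refine lt_of_le_of_ne hge ?_
          intro h
          apply ne_of_lt hlt
          rw [← PrimeSpectrum.asIdeal_lt_asIdeal] at hlt
          have := congrArg (fun (J : Ideal S) => J.comap f) h
          simp only [hqlast, hQ] at this
          exact PrimeSpectrum.ext this
        exact ⟨q.snoc ⟨Q, hQp⟩ hlt2, by simp [hqlen], by simpa using hQ⟩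
    show Order.krullDim (PrimeSpectrum R) ≤ Order.krullDim (PrimeSpectrum S)
    refine iSup_le fun p => ?_
    obtain ⟨q, hq, -⟩ := key p.length p rfl
    rw [← hq]
    exact le_iSup (fun p : LTSeries (PrimeSpectrum S) => ((p.length : ℕ∞) : WithBot ℕ∞)) q
  · refine Order.krullDim_le_of_strictMono
      (fun Q : PrimeSpectrum S => PrimeSpectrum.comap f Q) ?_
    intro Q₁ Q₂ h
    rw [← PrimeSpectrum.asIdeal_lt_asIdeal] at h
    obtain ⟨x, hx₂, hx₁⟩ := SetLike.exists_of_lt h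
    haveI := Q₁.isPrime
    have := Ideal.comap_lt_comap_of_integral_mem_sdiff (h.le) ⟨hx₂, hx₁⟩
      (Algebra.IsIntegral.isIntegral (R := R) x)
    rw [halg] at this
    exact this

lemma kerLift_isIntegral {R S : Type*} [CommRing R] [CommRing S] (f : R →+* S)
    (h : f.IsIntegral) : (RingHom.kerLift f).IsIntegral := by
  intro s
  obtain ⟨p, hm, hev⟩ := h s
  refine ⟨p.map (Ideal.Quotient.mk (RingHom.ker f)), hm.map _, ?_⟩
  rw [Polynomial.eval₂_map]
  have hc : (RingHom.kerLift f).comp (Ideal.Quotient.mk (RingHom.ker f)) = f :=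
    RingHom.ext fun r => RingHom.kerLift_mk f r
  rw [hc]; exact hev

instance homog_finite (K : Type*) [Field K] (M u : ℕ) :
    Module.Finite K (MvPolynomial.homogeneousSubmodule (Fin M) K u) := by
  have hle : MvPolynomial.homogeneousSubmodule (Fin M) K u ≤
      MvPolynomial.restrictTotalDegree (Fin M) K u := by
    intro p hp
    rw [MvPolynomial.mem_restrictTotalDegree]
    exact (MvPolynomial.mem_homogeneousSubmodule _ _ |>.mp hp).totalDegree_le
  exact Submodule.finiteDimensional_of_le hle

lemma hilbert_le {K : Type*} [Field K] {m l d u : ℕ}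
    (I : Ideal (MvPolynomial (Fin m) K)) (P : Fin l → MvPolynomial (Fin m) K)
    (hPhom : ∀ i, (P i).IsHomogeneous d) :
    hilbertFn K l (RingHom.ker (MvPolynomial.eval₂Hom ((Ideal.Quotient.mk I).comp MvPolynomial.C)
      fun i => Ideal.Quotient.mk I (P i))) u ≤ hilbertFn K m I (d * u) := by
  set φₐ : MvPolynomial (Fin l) K →ₐ[K] MvPolynomial (Fin m) K ⧸ I :=
    MvPolynomial.aeval (fun i => Ideal.Quotient.mk I (P i)) with hφₐ
  have hφeq : (φₐ : MvPolynomial (Fin l) K →+* MvPolynomial (Fin m) K ⧸ I) =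
      MvPolynomial.eval₂Hom ((Ideal.Quotient.mk I).comp MvPolynomial.C)
        fun i => Ideal.Quotient.mk I (P i) := rfl
  have hJ : RingHom.ker (MvPolynomial.eval₂Hom ((Ideal.Quotient.mk I).comp MvPolynomial.C)
      fun i => Ideal.Quotient.mk I (P i)) = RingHom.ker φₐ := by rw [← hφeq]; rfl
  rw [hilbertFn, hilbertFn, hJ]
  set L := (Ideal.kerLiftAlg φₐ).toLinearMap with hL
  have hLinj : Function.Injective L := Ideal.kerLiftAlg_injective φₐ
  have hcomp : φₐ.toLinearMap =
      L ∘ₗ (Ideal.Quotient.mkₐ K (RingHom.ker φₐ)).toLinearMap := by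
    ext x
    simp [L, Ideal.kerLiftAlg_mk]
  have e1 : ((MvPolynomial.homogeneousSubmodule (Fin l) K u).map
        (Ideal.Quotient.mkₐ K (RingHom.ker φₐ)).toLinearMap).map L =
      (MvPolynomial.homogeneousSubmodule (Fin l) K u).map φₐ.toLinearMap := by
    rw [hcomp, Submodule.map_comp]
  have e2 : (MvPolynomial.homogeneousSubmodule (Fin l) K u).map φₐ.toLinearMap ≤
      (MvPolynomial.homogeneousSubmodule (Fin m) K (d * u)).map
        (Ideal.Quotient.mkₐ K I).toLinearMap := by
    rintro _ ⟨Q, hQ, rfl⟩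
    have hQ' : MvPolynomial.IsHomogeneous Q u := hQ
    refine ⟨MvPolynomial.aeval P Q, ?_, ?_⟩
    · exact hQ'.aeval P hPhom
    · show (Ideal.Quotient.mkₐ K I) (MvPolynomial.aeval P Q) = φₐ Q
      exact DFunLike.congr_fun
        (MvPolynomial.comp_aeval (f := P) (Ideal.Quotient.mkₐ K I)) Q
  haveI : Module.Finite K ((MvPolynomial.homogeneousSubmodule (Fin m) K (d * u)).map
      (Ideal.Quotient.mkₐ K I).toLinearMap) := Module.Finite.map _ _
  set S₁ := (MvPolynomial.homogeneousSubmodule (Fin l) K u).map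
    (Ideal.Quotient.mkₐ K (RingHom.ker φₐ)).toLinearMap with hS₁
  have efr : Module.finrank K S₁ = Module.finrank K (S₁.map L) :=
    (Submodule.equivMapOfInjective L hLinj S₁).finrank_eq
  rw [efr, e1]
  exact Submodule.finrank_mono e2

/-- let `V ⊆ ℙ^m` be an irreducible projective variety of
dimension `n` and degree `δ` over an algebraically closed field `K` (given by a
homogeneous prime ideal `I`; the degree is characterized via the Hilbert
function asymptotics), and let `Φ : V → ℙ^{l-1}` be the finite morphism given
by homogeneous polynomials `P_0, …, P_{l-1}` of common degree `d` with no
common zero on `V`, corresponding to the ring map `φ : K[y]/ ⟶ K[x]/I`,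
`y_i ↦ P_i mod I`. Then `Y = Φ(V)` (defined by the homogeneous prime ideal
`ker φ`) is an irreducible projective variety of dimension `n` and its degree
`Δ_Y` satisfies `Δ_Y ≤ d^n · δ`. -/
theorem image_variety_dimension_and_degree
    {K : Type*} [Field K] [IsAlgClosed K] (m l n d δ ΔY : ℕ)
    (hd : 1 ≤ d) (hδ : 0 < δ)
    (I : Ideal (MvPolynomial (Fin (m + 1)) K)) (hprime : I.IsPrime)
    (hhomI : ∀ f ∈ I, ∀ e : ℕ, MvPolynomial.homogeneousComponent e f ∈ I)
    (hdim : ringKrullDim (MvPolynomial (Fin (m + 1)) K ⧸ I) = (n + 1 : ℕ))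
    (hdegV : Filter.Tendsto
      (fun u : ℕ => (hilbertFn K (m + 1) I u : ℝ) * (n.factorial : ℝ) / (u : ℝ) ^ n)
      Filter.atTop (nhds (δ : ℝ)))
    (P : Fin (l + 1) → MvPolynomial (Fin (m + 1)) K)
    (hPhom : ∀ i, (P i).IsHomogeneous d)
    (hPempty : ∀ x : Fin (m + 1) → K, x ≠ 0 → (∀ f ∈ I, MvPolynomial.eval x f = 0) →
      ∃ i, MvPolynomial.eval x (P i) ≠ 0)
    (hfinite : (MvPolynomial.eval₂Hom ((Ideal.Quotient.mk I).comp MvPolynomial.C)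
      fun i => Ideal.Quotient.mk I (P i)).Finite)
    (hdegY : Filter.Tendsto
      (fun u : ℕ => (hilbertFn K (l + 1)
          (RingHom.ker (MvPolynomial.eval₂Hom ((Ideal.Quotient.mk I).comp MvPolynomial.C)
            fun i => Ideal.Quotient.mk I (P i))) u : ℝ) *
        (n.factorial : ℝ) / (u : ℝ) ^ n)
      Filter.atTop (nhds (ΔY : ℝ))) :
    (RingHom.ker (MvPolynomial.eval₂Hom ((Ideal.Quotient.mk I).comp MvPolynomial.C)
        fun i => Ideal.Quotient.mk I (P i))).IsPrime ∧
      ringKrullDim (MvPolynomial (Fin (l + 1)) K ⧸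
        RingHom.ker (MvPolynomial.eval₂Hom ((Ideal.Quotient.mk I).comp MvPolynomial.C)
          fun i => Ideal.Quotient.mk I (P i))) = (n + 1 : ℕ) ∧
      ΔY ≤ d ^ n * δ := by
  haveI := hprime
  set φ := MvPolynomial.eval₂Hom ((Ideal.Quotient.mk I).comp MvPolynomial.C)
    fun i => Ideal.Quotient.mk I (P i) with hφ
  refine ⟨RingHom.ker_isPrime φ, ?_, ?_⟩
  · -- dimension
    rw [← hdim]
    exact ringKrullDim_eq_of_injective_isIntegral (RingHom.kerLift φ)
      (RingHom.kerLift_injective φ) (kerLift_isIntegral φ hfinite.to_isIntegral)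
  · -- degree bound
    have key : ∀ u : ℕ, hilbertFn K (l + 1) (RingHom.ker φ) u ≤ hilbertFn K (m + 1) I (d * u) :=
      fun u => hilbert_le I P hPhom
    have hmul : Filter.Tendsto (fun u : ℕ => d * u) Filter.atTop Filter.atTop :=
      Filter.tendsto_atTop_mono (fun u => Nat.le_mul_of_pos_left u (by omega))
        Filter.tendsto_id
    have h1 := hdegV.comp hmul
    have h2 := h1.mul_const ((d : ℝ) ^ n)
    have hle : ∀ᶠ u : ℕ in Filter.atTop,
        (hilbertFn K (l + 1) (RingHom.ker φ) u : ℝ) * (n.factorial : ℝ) / (u : ℝ) ^ n ≤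
        ((fun u : ℕ => (hilbertFn K (m + 1) I u : ℝ) * (n.factorial : ℝ) / (u : ℝ) ^ n) ∘
          fun u : ℕ => d * u) u * (d : ℝ) ^ n := by
      filter_upwards [Filter.eventually_ge_atTop 1] with u hu
      have hu0 : (0 : ℝ) < (u : ℝ) ^ n := by positivity
      have hd0 : (0 : ℝ) < (d : ℝ) ^ n := by positivity
      have hcast : ((d * u : ℕ) : ℝ) ^ n = (d : ℝ) ^ n * (u : ℝ) ^ n := by
        push_cast
        ring
      show _ ≤ (hilbertFn K (m + 1) I (d * u) : ℝ) * (n.factorial : ℝ) /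
        ((d * u : ℕ) : ℝ) ^ n * (d : ℝ) ^ n
      rw [hcast]
      have hrhs : (hilbertFn K (m + 1) I (d * u) : ℝ) * (n.factorial : ℝ) /
          ((d : ℝ) ^ n * (u : ℝ) ^ n) * (d : ℝ) ^ n =
          (hilbertFn K (m + 1) I (d * u) : ℝ) * (n.factorial : ℝ) / (u : ℝ) ^ n := by
        field_simp
      rw [hrhs]
      have hnum : (hilbertFn K (l + 1) (RingHom.ker φ) u : ℝ) ≤
          (hilbertFn K (m + 1) I (d * u) : ℝ) := by
        exact_mod_cast key u
      gcongr
    have hfin : (ΔY : ℝ) ≤ (δ : ℝ) * (d : ℝ) ^ n :=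
      le_of_tendsto_of_tendsto hdegY h2 hle
    have : (ΔY : ℝ) ≤ ((d ^ n * δ : ℕ) : ℝ) := by
      push_cast
      linarith [hfin]
    exact_mod_cast this
end
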